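/- Let n ≥ 4, N = C(n−2,2), and let F̄_n ⊆ (ℂP^1)^N be the set of points ((c_{ij}:c'_{ij}))_{3 ≤ i < j ≤ n} satisfying c'_{ij}·c_{ik}·c'_{jk} = c_{ij}·c'_{ik}·c_{jk} for all 3 ≤ i < j < k ≤ n. Then F̄_n, with its subspace topology, is a compact topological space that admits the structure of a complex manifold of complex dimension n − 3 = C(n−2,2) − C(n−3,2) for which the inclusion F̄_n ↪ (ℂP^1)^N is a holomorphic embedding. -/

import Mathlib

open Projectivization

/-- The complex projective line `ℂP¹`. -/
abbrev CP1 : Type := Projectivization ℂ (Fin 2 → ℂ)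

/-- `ℂP¹` carries the quotient topology coming from `ℂ² ∖ {0}`. -/
noncomputable instance : TopologicalSpace CP1 :=
  inferInstanceAs (TopologicalSpace (Quotient (projectivizationSetoid ℂ (Fin 2 → ℂ))))

/-- The cubic relation `c'_{ij}·c_{ik}·c'_{jk} = c_{ij}·c'_{ik}·c_{jk}` for three points of
`ℂP¹`, expressed through homogeneous representatives (it is homogeneous of degree one in
each point, hence independent of the choice of representatives). -/
def cubicRel (x y z : CP1) : Prop :=
  Projectivization.rep x 1 * Projectivization.rep y 0 * Projectivization.rep z 1
    = Projectivization.rep x 0 * Projectivization.rep y 1 * Projectivization.rep z 0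

/-- Pairs `3 ≤ i < j ≤ n`; there are `N = C(n-2,2)` of them. -/
def PairIdx (n : ℕ) : Type := {p : ℕ × ℕ // 3 ≤ p.1 ∧ p.1 < p.2 ∧ p.2 ≤ n}

/-- The variety `F̄_n ⊆ (ℂP¹)^N` cut out by the cubic relations
`c'_{ij}·c_{ik}·c'_{jk} = c_{ij}·c'_{ik}·c_{jk}`, `3 ≤ i < j < k ≤ n`. -/
def FbarSet (n : ℕ) : Set (PairIdx n → CP1) :=
  {x | ∀ (i j k : ℕ) (h3 : 3 ≤ i) (hij : i < j) (hjk : j < k) (hkn : k ≤ n),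
      cubicRel (x ⟨(i, j), h3, hij, le_trans (le_of_lt hjk) hkn⟩)
               (x ⟨(i, k), h3, lt_trans hij hjk, hkn⟩)
               (x ⟨(j, k), le_trans h3 (le_of_lt hij), hjk, hkn⟩)}

/-- Given a charted-space structure on `F̄_n` modelled on `ℂ^{n-3}`, this says that it makes
`F̄_n` a complex manifold (of complex dimension `n-3`) and that the inclusion
`F̄_n ↪ (ℂP¹)^N` is holomorphic: for each of the `N` coordinates, both standard affine
readings `c'/c` and `c/c'` of that coordinate are holomorphic (complex-`MDifferentiable`)
on the locus where they are defined. -/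
def IsComplexManifoldStructureWithHolomorphicInclusion (n : ℕ)
    (cs : ChartedSpace (EuclideanSpace ℂ (Fin (n - 3))) ↥(FbarSet n)) : Prop := by
  letI := cs
  exact
    IsManifold
        (modelWithCornersSelf ℂ (EuclideanSpace ℂ (Fin (n - 3)))) (⊤ : ℕ∞) ↥(FbarSet n) ∧
    ∀ P : PairIdx n,
      MDifferentiableOn (modelWithCornersSelf ℂ (EuclideanSpace ℂ (Fin (n - 3))))
        (modelWithCornersSelf ℂ ℂ)
        (fun x : ↥(FbarSet n) =>
          Projectivization.rep (x.val P) 1 / Projectivization.rep (x.val P) 0)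
        {x : ↥(FbarSet n) | Projectivization.rep (x.val P) 0 ≠ 0} ∧
      MDifferentiableOn (modelWithCornersSelf ℂ (EuclideanSpace ℂ (Fin (n - 3))))
        (modelWithCornersSelf ℂ ℂ)
        (fun x : ↥(FbarSet n) =>
          Projectivization.rep (x.val P) 0 / Projectivization.rep (x.val P) 1)
        {x : ↥(FbarSet n) | Projectivization.rep (x.val P) 1 ≠ 0}

/-!
Write `T_{ab} = c_{ab}/c'_{ab} ∈ ℂP¹` for the pairs of indices `a < b` (shifted to
`0, …, n - 3`) and `T_{ba} = 1/T_{ab}`; the cubic relations say `T_{ac} = T_{ab} T_{bc}`.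
For an ordering `σ` of the indices, the points at which every `σ`-increasing `T` is finite
form an open set; there each `T` is a monomial in the `n - 3` coordinates `T` of
`σ`-consecutive pairs, and conversely arbitrary values of these coordinates define a point
of `F̄_n`. These charts cover `F̄_n`: on `F̄_n` the relation `T_{ab} = 0` is a strict order
on the indices, and any linear extension of it gives a chart through the point. Transition
maps and the affine readings of the inclusion are quotients of monomials, hence
holomorphic. Compactness holds because `F̄_n` is closed in the compact space `(ℂP¹)^N`.
-/

namespace Fbar

noncomputable section

open Topology

lemma forall_distinct_of_sorted {ι : Type*} [LinearOrder ι] {P : ι → ι → ι → Prop}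
    (swap12 : ∀ {a b c}, P a b c → P b a c) (swap23 : ∀ {a b c}, P a b c → P a c b)
    (sorted : ∀ {a b c}, a < b → b < c → P a b c) {a b c : ι}
    (hab : a ≠ b) (hac : a ≠ c) (hbc : b ≠ c) : P a b c := by
  rcases hab.lt_or_gt with hab | hab <;> rcases hac.lt_or_gt with hac | hac <;>
    rcases hbc.lt_or_gt with hbc | hbc
  · exact sorted hab hbc
  · exact swap23 (sorted hac hbc)
  · exact absurd (hab.trans hbc) hac.not_gt
  · exact swap23 (swap12 (sorted hac hab))
  · exact swap12 (sorted hab hac)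
  · exact absurd (hac.trans hbc) hab.not_gt
  · exact swap12 (swap23 (sorted hbc hac))
  · exact swap12 (swap23 (swap12 (sorted hbc hab)))

lemma exists_perm_lt_of_lt {m : ℕ} {α : Type*} [LinearOrder α] (f : Fin m → α) :
    ∃ σ : Equiv.Perm (Fin m), ∀ a b, f a < f b → σ a < σ b := by
  refine ⟨(Tuple.sort f).symm, fun a b h => lt_of_not_ge fun hle => h.not_ge ?_⟩
  simpa using Tuple.monotone_sort f hle

lemma exists_perm_lt_of_isStrictOrder {m : ℕ} (r : Fin m → Fin m → Prop)
    [IsStrictOrder (Fin m) r] : ∃ σ : Equiv.Perm (Fin m), ∀ a b, r a b → σ a < σ b := by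
  classical
  obtain ⟨σ, hσ⟩ := exists_perm_lt_of_lt fun a => (Finset.univ.filter (r · a)).card
  refine ⟨σ, fun a b hab => hσ a b (Finset.card_lt_card ?_)⟩
  refine (Finset.ssubset_iff_of_subset fun c hc => ?_).2
    ⟨a, by simpa using hab, by simp [irrefl]⟩
  simp only [Finset.mem_filter, Finset.mem_univ, true_and] at hc ⊢
  exact _root_.trans hc hab

lemma exists_rep_mk_eq_smul {v : Fin 2 → ℂ} (hv : v ≠ 0) :
    ∃ a : ℂ, a ≠ 0 ∧ (mk ℂ v hv).rep = a • v := by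
  obtain ⟨a, ha⟩ := exists_smul_eq_mk_rep ℂ v hv
  exact ⟨a, a.ne_zero, ha.symm⟩

lemma rep_mk_ne_zero_iff {v : Fin 2 → ℂ} (hv : v ≠ 0) (i : Fin 2) :
    (mk ℂ v hv).rep i ≠ 0 ↔ v i ≠ 0 := by
  obtain ⟨a, ha, h⟩ := exists_rep_mk_eq_smul hv
  simp [h, ha]

lemma rep_mk_div {v : Fin 2 → ℂ} (hv : v ≠ 0) (i j : Fin 2) :
    (mk ℂ v hv).rep i / (mk ℂ v hv).rep j = v i / v j := by
  obtain ⟨a, ha, h⟩ := exists_rep_mk_eq_smul hv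
  simp [h, mul_div_mul_left _ _ ha]

lemma mk_eq_mk_of_mul_eq_mul {v w : Fin 2 → ℂ} (hv : v ≠ 0) (hw : w ≠ 0)
    (h : v 0 * w 1 = v 1 * w 0) : mk ℂ v hv = mk ℂ w hw := by
  rw [mk_eq_mk_iff']
  by_cases h0 : w 0 = 0
  · have h1 : w 1 ≠ 0 := fun h1 => hw (by ext i; fin_cases i <;> simp [h0, h1])
    have hv0 : v 0 = 0 := by simpa [h0, h1] using h
    refine ⟨v 1 / w 1, funext fun i => ?_⟩
    fin_cases i <;> simp [h0, h1, hv0]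
  · refine ⟨v 0 / w 0, funext fun i => ?_⟩
    fin_cases i
    · simp [h0]
    · simp only [Fin.mk_one, Pi.smul_apply, smul_eq_mul]
      field_simp
      linear_combination h

lemma cubicRel_mk_iff {x y z : Fin 2 → ℂ} (hx : x ≠ 0) (hy : y ≠ 0) (hz : z ≠ 0) :
    cubicRel (mk ℂ x hx) (mk ℂ y hy) (mk ℂ z hz) ↔ x 1 * y 0 * z 1 = x 0 * y 1 * z 0 := by
  obtain ⟨a, ha, hxa⟩ := exists_rep_mk_eq_smul hx
  obtain ⟨b, hb, hyb⟩ := exists_rep_mk_eq_smul hy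
  obtain ⟨c, hc, hzc⟩ := exists_rep_mk_eq_smul hz
  have habc : a * b * c ≠ 0 := by positivity
  simp only [cubicRel, hxa, hyb, hzc, Pi.smul_apply, smul_eq_mul]
  constructor
  · intro h
    exact mul_left_cancel₀ habc (by linear_combination h)
  · intro h
    linear_combination a * b * c * h

lemma continuous_val_apply (k : Fin 2) :
    Continuous fun w : {v : Fin 2 → ℂ // v ≠ 0} => w.1 k :=
  (continuous_apply k).comp continuous_subtype_val

def mkc (w : {v : Fin 2 → ℂ // v ≠ 0}) : CP1 := mk ℂ w.1 w.2

lemma isOpenQuotientMap_mkc : IsOpenQuotientMap mkc := by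
  have hq : IsQuotientMap mkc := isQuotientMap_quotient_mk'
  refine .of_isOpenMap_isQuotientMap (fun U hU => ?_) hq
  rw [← hq.isOpen_preimage]
  have hsat : mkc ⁻¹' (mkc '' U) =
      ⋃ a : ℂˣ, (fun w : {v : Fin 2 → ℂ // v ≠ 0} =>
        ⟨a • w.1, smul_ne_zero a.ne_zero w.2⟩) ⁻¹' U := by
    ext w
    simp only [Set.mem_preimage, Set.mem_image, Set.mem_iUnion]
    constructor
    · rintro ⟨u, hu, huw⟩
      obtain ⟨a, ha⟩ := (mk_eq_mk_iff ℂ _ _ u.2 w.2).1 huw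
      exact ⟨a, by convert hu⟩
    · rintro ⟨a, ha⟩
      exact ⟨_, ha, (mk_eq_mk_iff ℂ _ _ _ _).2 ⟨a, rfl⟩⟩
  rw [hsat]
  exact isOpen_iUnion fun a => hU.preimage ((continuous_subtype_val.const_smul _).subtype_mk _)

lemma continuous_mk_comp {X : Type*} [TopologicalSpace X] {f : X → Fin 2 → ℂ}
    (hf : Continuous f) (hf0 : ∀ x, f x ≠ 0) : Continuous fun x => mk ℂ (f x) (hf0 x) :=
  isOpenQuotientMap_mkc.continuous.comp (hf.subtype_mk hf0)

lemma isOpen_setOf_rep_ne_zero (i : Fin 2) : IsOpen {p : CP1 | p.rep i ≠ 0} := by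
  rw [← isOpenQuotientMap_mkc.isQuotientMap.isOpen_preimage]
  have hpre : mkc ⁻¹' {p | p.rep i ≠ 0} = {w | w.1 i ≠ 0} := by
    ext w
    exact rep_mk_ne_zero_iff w.2 i
  rw [hpre]
  exact isOpen_ne_fun (continuous_val_apply i) continuous_const

lemma continuousOn_rep_div (i j : Fin 2) :
    ContinuousOn (fun p : CP1 => p.rep i / p.rep j) {p | p.rep j ≠ 0} := by
  refine (isOpen_setOf_rep_ne_zero j).continuousOn_iff.2 fun p hp => ?_
  obtain ⟨w, rfl⟩ := isOpenQuotientMap_mkc.surjective p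
  rw [← isOpenQuotientMap_mkc.continuousAt_comp_iff]
  have hcomp : (fun p : CP1 => p.rep i / p.rep j) ∘ mkc = fun w => w.1 i / w.1 j := by
    ext w
    exact rep_mk_div w.2 i j
  rw [hcomp]
  exact (continuous_val_apply i).continuousAt.div (continuous_val_apply j).continuousAt
    ((rep_mk_ne_zero_iff w.2 j).1 hp)

instance : CompactSpace CP1 := by
  have hsphere : ∀ s : Metric.sphere (0 : Fin 2 → ℂ) 1, (s : Fin 2 → ℂ) ≠ 0 :=
    fun s hs => by simpa [hs] using s.2
  refine Function.Surjective.compactSpace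
    (continuous_mk_comp continuous_subtype_val hsphere) fun p => ?_
  have hnorm : ‖p.rep‖ ≠ 0 := norm_ne_zero_iff.2 p.rep_nonzero
  refine ⟨⟨(‖p.rep‖⁻¹ : ℂ) • p.rep, by simp [norm_smul, hnorm]⟩, ?_⟩
  conv_rhs => rw [← p.mk_rep]
  exact (mk_eq_mk_iff' ℂ _ _ _ _).2 ⟨_, rfl⟩

lemma isClosed_setOf_cubicRel : IsClosed {t : CP1 × CP1 × CP1 | cubicRel t.1 t.2.1 t.2.2} := by
  have hq := (isOpenQuotientMap_mkc.prodMap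
    (isOpenQuotientMap_mkc.prodMap isOpenQuotientMap_mkc)).isQuotientMap
  rw [← hq.isClosed_preimage]
  have hpre : Prod.map mkc (Prod.map mkc mkc) ⁻¹' {t | cubicRel t.1 t.2.1 t.2.2} =
      Prod.map Subtype.val (Prod.map Subtype.val Subtype.val) ⁻¹'
        {t : (Fin 2 → ℂ) × (Fin 2 → ℂ) × (Fin 2 → ℂ) |
          t.1 1 * t.2.1 0 * t.2.2 1 = t.1 0 * t.2.1 1 * t.2.2 0} := by
    ext w
    exact cubicRel_mk_iff w.1.2 w.2.1.2 w.2.2.2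
  rw [hpre]
  exact (isClosed_eq (by fun_prop) (by fun_prop)).preimage
    (continuous_subtype_val.prodMap (continuous_subtype_val.prodMap continuous_subtype_val))

theorem isCompact_FbarSet (n : ℕ) : IsCompact (FbarSet n) := by
  refine IsClosed.isCompact ?_
  simp only [FbarSet, Set.ofPred_forall]
  repeat refine isClosed_iInter fun _ => ?_
  exact IsClosed.preimage (f := fun x : PairIdx n → CP1 => (x _, x _, x _))
    ((continuous_apply _).prodMk ((continuous_apply _).prodMk (continuous_apply _)))
    isClosed_setOf_cubicRel

section OrientedCubic

variable {ι : Type*} [LinearOrder ι] {v : ι → ι → Fin 2 → ℂ}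

/-- `cubicRel` for the oriented pairs `(a, b)`, `(a, c)`, `(b, c)` with homogeneous
coordinates `v`. -/
def OrientedCubic (v : ι → ι → Fin 2 → ℂ) (a b c : ι) : Prop :=
  v a b 1 * v a c 0 * v b c 1 = v a b 0 * v a c 1 * v b c 0

lemma OrientedCubic.of_distinct (hv : ∀ a b, v b a 0 = v a b 1)
    (sorted : ∀ {a b c}, a < b → b < c → OrientedCubic v a b c) {a b c : ι}
    (hab : a ≠ b) (hac : a ≠ c) (hbc : b ≠ c) : OrientedCubic v a b c := by
  refine forall_distinct_of_sorted (fun {a b c} h => ?_) (fun {a b c} h => ?_) sorted hab hac hbc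
  · unfold OrientedCubic at h ⊢
    linear_combination -h - v b c 0 * v a c 1 * hv b a - v b c 1 * v a c 0 * hv a b
  · unfold OrientedCubic at h ⊢
    linear_combination -h - v a c 1 * v a b 0 * hv c b - v a c 0 * v a b 1 * hv b c

end OrientedCubic

section Pairs

variable {n : ℕ}

/-- The smaller element of a pair, shifted from `3, …, n` to `Fin (n - 2)`. -/
def PairIdx.fst (P : PairIdx n) : Fin (n - 2) := ⟨P.1.1 - 3, by have := P.2; omega⟩

def PairIdx.snd (P : PairIdx n) : Fin (n - 2) := ⟨P.1.2 - 3, by have := P.2; omega⟩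

lemma PairIdx.fst_lt_snd (P : PairIdx n) : PairIdx.fst P < PairIdx.snd P := by
  have := P.2
  simp only [PairIdx.fst, PairIdx.snd, Fin.mk_lt_mk]
  omega

def pairOf (a b : Fin (n - 2)) (h : a < b) : PairIdx n :=
  ⟨(a + 3, b + 3), by have := b.2; simp only [Fin.lt_def] at h; omega⟩

@[simp] lemma fst_pairOf (a b : Fin (n - 2)) (h : a < b) : PairIdx.fst (pairOf a b h) = a :=
  Fin.ext (by simp [pairOf, PairIdx.fst])

@[simp] lemma snd_pairOf (a b : Fin (n - 2)) (h : a < b) : PairIdx.snd (pairOf a b h) = b :=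
  Fin.ext (by simp [pairOf, PairIdx.snd])

lemma pairOf_fst_snd (P : PairIdx n) :
    pairOf (PairIdx.fst P) (PairIdx.snd P) (PairIdx.fst_lt_snd P) = P := by
  have := P.2
  apply Subtype.ext
  simp only [pairOf, PairIdx.fst, PairIdx.snd]
  ext <;> simp <;> omega

/-- Homogeneous coordinates of the oriented pair `(a, b)`: those of `x_{ab}` if `a < b`,
the swapped ones of `x_{ba}` if `b < a`, and `(1 : 1)` if `a = b`. -/
def orep (x : PairIdx n → CP1) (a b : Fin (n - 2)) : Fin 2 → ℂ :=
  if h : a < b then (x (pairOf a b h)).rep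
  else if h' : b < a then ![(x (pairOf b a h')).rep 1, (x (pairOf b a h')).rep 0]
  else ![1, 1]

variable {x : PairIdx n → CP1} {a b : Fin (n - 2)}

lemma orep_of_lt (h : a < b) : orep x a b = (x (pairOf a b h)).rep := dif_pos h

lemma orep_of_gt (h : b < a) :
    orep x a b = ![(x (pairOf b a h)).rep 1, (x (pairOf b a h)).rep 0] := by
  rw [orep, dif_neg h.not_gt, dif_pos h]

@[simp] lemma orep_self (x : PairIdx n → CP1) (a : Fin (n - 2)) : orep x a a = ![1, 1] := by
  simp [orep]

lemma orep_swap (x : PairIdx n → CP1) (a b : Fin (n - 2)) : orep x b a 0 = orep x a b 1 := by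
  rcases lt_trichotomy a b with h | rfl | h
  · simp [orep_of_lt h, orep_of_gt h]
  · simp
  · simp [orep_of_lt h, orep_of_gt h]

lemma orep_ne_zero (x : PairIdx n → CP1) (a b : Fin (n - 2)) : orep x a b ≠ 0 := by
  rcases lt_trichotomy a b with h | rfl | h
  · exact orep_of_lt h ▸ (x _).rep_nonzero
  · simp
  · rw [orep_of_gt h]
    intro h0
    apply (x (pairOf b a h)).rep_nonzero
    ext i
    fin_cases i
    · simpa using congrFun h0 1
    · simpa using congrFun h0 0

lemma orientedCubic_orep (hx : x ∈ FbarSet n) {a b c : Fin (n - 2)}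
    (hab : a ≠ b) (hac : a ≠ c) (hbc : b ≠ c) : OrientedCubic (orep x) a b c := by
  refine OrientedCubic.of_distinct (orep_swap x) (fun {a b c} hab hbc => ?_) hab hac hbc
  have := c.2
  simp only [Fin.lt_def] at hab hbc
  rw [OrientedCubic, orep_of_lt hab, orep_of_lt hbc, orep_of_lt (hab.trans hbc)]
  exact hx (a + 3) (b + 3) (c + 3) (by omega) (by omega) (by omega) (by omega)

lemma orep_one_ne_zero_of_orep_zero {a b : Fin (n - 2)} (h : orep x a b 0 = 0) :
    orep x a b 1 ≠ 0 := fun h1 =>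
  orep_ne_zero x a b (funext fun i => by fin_cases i <;> assumption)

lemma isStrictOrder_orep_zero_eq_zero (hF : x ∈ FbarSet n) :
    IsStrictOrder (Fin (n - 2)) fun a b => orep x a b 0 = 0 where
  irrefl a := by simp
  trans a b c hab hbc := by
    have hne : ∀ {a b}, orep x a b 0 = 0 → a ≠ b := by
      rintro a b h rfl
      simp at h
    have hac : a ≠ c := by
      rintro rfl
      exact orep_one_ne_zero_of_orep_zero hab (orep_swap x a b ▸ hbc)
    have hcubic := orientedCubic_orep hF (hne hab) hac (hne hbc)
    unfold OrientedCubic at hcubic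
    rw [hab, hbc, zero_mul, mul_zero] at hcubic
    simpa [orep_one_ne_zero_of_orep_zero hab,
      orep_one_ne_zero_of_orep_zero hbc] using hcubic

end Pairs

section Monomials

variable {d : ℕ}

/-- `u_k ⋯ u_{l-1}`, where coordinates beyond `d` count as `1`. -/
def mon (u : Fin d → ℂ) (k l : ℕ) : ℂ :=
  ∏ i ∈ Finset.Ico k l, if h : i < d then u ⟨i, h⟩ else 1

lemma mon_self (u : Fin d → ℂ) (k : ℕ) : mon u k k = 1 := by
  simp [mon]

lemma mon_mul_mon (u : Fin d → ℂ) {k l m : ℕ} (hkl : k ≤ l) (hlm : l ≤ m) :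
    mon u k l * mon u l m = mon u k m :=
  Finset.prod_Ico_consecutive _ hkl hlm

lemma mon_succ (u : Fin d → ℂ) (k : Fin d) : mon u k (k + 1) = u k := by
  simp [mon]

lemma contDiff_mon (k l : ℕ) : ContDiff ℂ ⊤ fun u : Fin d → ℂ => mon u k l := by
  refine contDiff_prod fun i _ => ?_
  split_ifs with h
  · exact contDiff_apply ℂ ℂ _
  · exact contDiff_const

/-- Homogeneous coordinates `(u_k ⋯ u_{l-1} : 1)`, resp. `(1 : u_l ⋯ u_{k-1})`, that the chart
with coordinates `u` assigns to the oriented pair of positions `(k, l)`. -/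
def ovec (u : Fin d → ℂ) (k l : ℕ) : Fin 2 → ℂ :=
  if k < l then ![mon u k l, 1] else ![1, mon u l k]

lemma ovec_swap (u : Fin d → ℂ) (k l : ℕ) : ovec u l k 0 = ovec u k l 1 := by
  rcases lt_trichotomy k l with h | rfl | h
  · simp [ovec, h, h.not_gt]
  · simp [ovec, mon_self]
  · simp [ovec, h, h.not_gt]

lemma ovec_ne_zero (u : Fin d → ℂ) (k l : ℕ) : ovec u k l ≠ 0 := by
  unfold ovec
  split_ifs <;> simp

lemma ovec_one_of_lt (u : Fin d → ℂ) {k l : ℕ} (h : k < l) : ovec u k l 1 = 1 := by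
  simp [ovec, h]

lemma orientedCubic_ovec (u : Fin d → ℂ) {k l m : ℕ} (hkl : k ≠ l) (hkm : k ≠ m)
    (hlm : l ≠ m) : OrientedCubic (ovec u) k l m := by
  refine OrientedCubic.of_distinct (ovec_swap u) (fun {k l m} hkl hlm => ?_) hkl hkm hlm
  simp only [OrientedCubic, ovec, hkl, hlm, hkl.trans hlm, if_true]
  simp only [Fin.isValue, Matrix.cons_val_one, Matrix.cons_val_zero, one_mul, mul_one]
  exact (mon_mul_mon u hkl.le hlm.le).symm

lemma contDiff_ovec (k l : ℕ) (i : Fin 2) :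
    ContDiff ℂ ⊤ fun u : Fin d → ℂ => ovec u k l i := by
  unfold ovec
  split_ifs <;> fin_cases i <;> simp [contDiff_mon, contDiff_const]

end Monomials

section Charts

variable {n : ℕ} (σ : Equiv.Perm (Fin (n - 2)))

/-- The inverse of the chart attached to the ordering `σ` (element `a` sits at position `σ a`). -/
def phi (u : Fin (n - 3) → ℂ) : PairIdx n → CP1 := fun P =>
  mk ℂ (ovec u (σ (PairIdx.fst P)) (σ (PairIdx.snd P))) (ovec_ne_zero _ _ _)

lemma phi_mem_FbarSet (u : Fin (n - 3) → ℂ) : phi σ u ∈ FbarSet n := by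
  intro i j k h3 hij hjk hkn
  have hval : ∀ {a b : Fin (n - 2)}, (a : ℕ) ≠ b → (σ a : ℕ) ≠ σ b := fun h h' =>
    h (congrArg Fin.val (σ.injective (Fin.ext h')))
  refine (cubicRel_mk_iff _ _ _).2 (orientedCubic_ovec u ?_ ?_ ?_) <;>
    exact hval (by simp only [PairIdx.fst, PairIdx.snd]; omega)

lemma exists_orep_phi_eq_smul (u : Fin (n - 3) → ℂ) {a b : Fin (n - 2)} (hab : a ≠ b) :
    ∃ c : ℂ, c ≠ 0 ∧ orep (phi σ u) a b = c • ovec u (σ a) (σ b) := by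
  rcases hab.lt_or_gt with h | h
  · obtain ⟨c, hc, hrep⟩ := exists_rep_mk_eq_smul (ovec_ne_zero u (σ a) (σ b))
    refine ⟨c, hc, ?_⟩
    simp only [orep_of_lt h, phi, fst_pairOf, snd_pairOf, hrep]
  · obtain ⟨c, hc, hrep⟩ := exists_rep_mk_eq_smul (ovec_ne_zero u (σ b) (σ a))
    refine ⟨c, hc, ?_⟩
    simp only [orep_of_gt h, phi, fst_pairOf, snd_pairOf, hrep]
    ext i
    fin_cases i
    · simp [ovec_swap]
    · simp [← ovec_swap u (σ a) (σ b)]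

lemma orep_phi_ne_zero_iff (u : Fin (n - 3) → ℂ) {a b : Fin (n - 2)} (hab : a ≠ b)
    (i : Fin 2) :
    orep (phi σ u) a b i ≠ 0 ↔ ovec u (σ a) (σ b) i ≠ 0 := by
  obtain ⟨c, hc, h⟩ := exists_orep_phi_eq_smul σ u hab
  simp [h, hc]

lemma orep_phi_div (u : Fin (n - 3) → ℂ) {a b : Fin (n - 2)} (hab : a ≠ b) :
    orep (phi σ u) a b 0 / orep (phi σ u) a b 1 =
      ovec u (σ a) (σ b) 0 / ovec u (σ a) (σ b) 1 := by
  obtain ⟨c, hc, h⟩ := exists_orep_phi_eq_smul σ u hab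
  simp [h, mul_div_mul_left _ _ hc]

/-- The points at which `c/c'` is finite for every `σ`-increasing oriented pair. -/
def Dom : Set (PairIdx n → CP1) := {x | ∀ a b, σ a < σ b → orep x a b 1 ≠ 0}

lemma phi_mem_Dom (u : Fin (n - 3) → ℂ) : phi σ u ∈ Dom σ := fun a b h => by
  rw [orep_phi_ne_zero_iff σ u (fun hab => h.ne (congrArg σ hab)), ovec_one_of_lt u h]
  exact one_ne_zero

lemma isOpen_setOf_orep_one_ne_zero (a b : Fin (n - 2)) :
    IsOpen {x : PairIdx n → CP1 | orep x a b 1 ≠ 0} := by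
  rcases lt_trichotomy a b with h | rfl | h
  · simp only [orep_of_lt h]
    exact (isOpen_setOf_rep_ne_zero 1).preimage (f := fun x : PairIdx n → CP1 => x _)
      (continuous_apply _)
  · simp
  · simp only [orep_of_gt h, Matrix.cons_val_one, Matrix.cons_val_zero]
    exact (isOpen_setOf_rep_ne_zero 0).preimage (f := fun x : PairIdx n → CP1 => x _)
      (continuous_apply _)

lemma isOpen_Dom : IsOpen (Dom σ) := by
  simp only [Dom, Set.ofPred_forall]
  refine isOpen_iInter_of_finite fun a => isOpen_iInter_of_finite fun b => ?_
  by_cases h : σ a < σ b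
  · simpa [h] using isOpen_setOf_orep_one_ne_zero a b
  · simp [h]

def affCoord (x : PairIdx n → CP1) (a b : Fin (n - 2)) : ℂ := orep x a b 0 / orep x a b 1

def psi (x : PairIdx n → CP1) : Fin (n - 3) → ℂ := fun k =>
  affCoord x (σ.symm ⟨k, by omega⟩) (σ.symm ⟨k + 1, by omega⟩)

variable {σ} {x : PairIdx n → CP1}

lemma orep_one_ne_zero_of_mem_Dom (hD : x ∈ Dom σ) {k l : Fin (n - 2)} (h : k < l) :
    orep x (σ.symm k) (σ.symm l) 1 ≠ 0 :=
  hD _ _ (by simpa using h)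

lemma affCoord_trans (hF : x ∈ FbarSet n) (hD : x ∈ Dom σ) {k l m : Fin (n - 2)}
    (hkl : k < l) (hlm : l < m) :
    affCoord x (σ.symm k) (σ.symm m) =
      affCoord x (σ.symm k) (σ.symm l) * affCoord x (σ.symm l) (σ.symm m) := by
  have hcubic : OrientedCubic (orep x) (σ.symm k) (σ.symm l) (σ.symm m) :=
    orientedCubic_orep hF (by simpa using hkl.ne) (by simpa using (hkl.trans hlm).ne)
      (by simpa using hlm.ne)
  have h1 := orep_one_ne_zero_of_mem_Dom hD hkl
  have h2 := orep_one_ne_zero_of_mem_Dom hD hlm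
  have h3 := orep_one_ne_zero_of_mem_Dom hD (hkl.trans hlm)
  unfold affCoord
  unfold OrientedCubic at hcubic
  field_simp
  linear_combination hcubic

lemma mon_psi (hF : x ∈ FbarSet n) (hD : x ∈ Dom σ) (k : Fin (n - 2)) {l : ℕ}
    (hkl : (k : ℕ) < l) (hl : l < n - 2) :
    mon (psi σ x) k l = affCoord x (σ.symm k) (σ.symm ⟨l, hl⟩) := by
  induction l, hkl using Nat.le_induction with
  | base => exact mon_succ (psi σ x) ⟨k, by omega⟩
  | succ l hkl ih =>
    rw [← mon_mul_mon _ (by omega : (k : ℕ) ≤ l) l.le_succ, ih (by omega),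
      mon_succ (psi σ x) ⟨l, by omega⟩, psi,
      ← affCoord_trans hF hD (l := ⟨l, by omega⟩) (Fin.mk_lt_mk.2 hkl)
        (Fin.mk_lt_mk.2 l.lt_succ_self)]

lemma psi_phi (u : Fin (n - 3) → ℂ) : psi σ (phi σ u) = u := by
  ext k
  rw [psi, affCoord, orep_phi_div σ u (by simp), Equiv.apply_symm_apply, Equiv.apply_symm_apply,
    ovec_one_of_lt u (Nat.lt_succ_self _), div_one, ovec, if_pos (Nat.lt_succ_self _)]
  exact mon_succ u k

lemma ovec_psi_mul_eq_mul_of_lt (hF : x ∈ FbarSet n) (hD : x ∈ Dom σ) {a b : Fin (n - 2)}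
    (h : σ a < σ b) :
    ovec (psi σ x) (σ a) (σ b) 0 * orep x a b 1 =
      ovec (psi σ x) (σ a) (σ b) 1 * orep x a b 0 := by
  have hmon := mon_psi hF hD (σ a) h (σ b).2
  simp only [Fin.eta, Equiv.symm_apply_apply] at hmon
  simp only [ovec, if_pos (show (σ a : ℕ) < σ b from h), hmon, affCoord]
  simp [div_mul_cancel₀ _ (hD a b h)]

lemma ovec_psi_mul_eq_mul (hF : x ∈ FbarSet n) (hD : x ∈ Dom σ) {a b : Fin (n - 2)}
    (hab : a ≠ b) :
    ovec (psi σ x) (σ a) (σ b) 0 * orep x a b 1 =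
      ovec (psi σ x) (σ a) (σ b) 1 * orep x a b 0 := by
  rcases (σ.injective.ne hab).lt_or_gt with h | h
  · exact ovec_psi_mul_eq_mul_of_lt hF hD h
  · have := ovec_psi_mul_eq_mul_of_lt hF hD h
    simp only [ovec_swap, orep_swap] at this ⊢
    linear_combination -this

lemma phi_psi (hF : x ∈ FbarSet n) (hD : x ∈ Dom σ) : phi σ (psi σ x) = x := by
  ext1 P
  have hx : x P = mk ℂ (orep x (PairIdx.fst P) (PairIdx.snd P)) (orep_ne_zero x _ _) := by
    simp only [orep_of_lt (PairIdx.fst_lt_snd P), pairOf_fst_snd, mk_rep]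
  rw [hx, phi]
  exact mk_eq_mk_of_mul_eq_mul _ _ (ovec_psi_mul_eq_mul hF hD (PairIdx.fst_lt_snd P).ne)

lemma exists_mem_Dom (hF : x ∈ FbarSet n) : ∃ σ : Equiv.Perm (Fin (n - 2)), x ∈ Dom σ := by
  have := isStrictOrder_orep_zero_eq_zero hF
  obtain ⟨σ, hσ⟩ := exists_perm_lt_of_isStrictOrder fun a b => orep x a b 0 = 0
  refine ⟨σ, fun a b h h1 => (hσ b a (orep_swap x a b ▸ h1)).not_gt h⟩

variable (σ)

lemma continuous_phi : Continuous (phi σ) :=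
  continuous_pi fun _ =>
    continuous_mk_comp (continuous_pi fun i => (contDiff_ovec _ _ i).continuous) _

lemma continuousOn_affCoord (a b : Fin (n - 2)) :
    ContinuousOn (fun x : PairIdx n → CP1 => affCoord x a b) {x | orep x a b 1 ≠ 0} := by
  rcases lt_trichotomy a b with h | rfl | h
  · simp only [affCoord, orep_of_lt h]
    exact (continuousOn_rep_div 0 1).comp (f := fun x : PairIdx n → CP1 => x _)
      (continuous_apply _).continuousOn fun _ hx => hx
  · simp only [affCoord, orep_self]
    exact continuousOn_const
  · simp only [affCoord, orep_of_gt h, Matrix.cons_val_one, Matrix.cons_val_zero]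
    exact (continuousOn_rep_div 1 0).comp (f := fun x : PairIdx n → CP1 => x _)
      (continuous_apply _).continuousOn fun _ hx => hx

lemma continuousOn_psi : ContinuousOn (psi σ) (Dom σ) :=
  continuousOn_pi.2 fun k => (continuousOn_affCoord _ _).mono fun _ hx =>
    orep_one_ne_zero_of_mem_Dom hx (Fin.mk_lt_mk.2 k.val.lt_succ_self)

/-- `EuclideanSpace.equiv`, stated with the normed topology on `Fin d → ℂ` so that calculus
lemmas apply to it directly. -/
def coordEquiv (d : ℕ) : EuclideanSpace ℂ (Fin d) ≃L[ℂ] (Fin d → ℂ) :=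
  EuclideanSpace.equiv _ ℂ

def chart : OpenPartialHomeomorph (FbarSet n) (EuclideanSpace ℂ (Fin (n - 3))) where
  toFun x := (coordEquiv _).symm (psi σ x)
  invFun u := ⟨phi σ (coordEquiv _ u), phi_mem_FbarSet σ _⟩
  source := Subtype.val ⁻¹' Dom σ
  target := Set.univ
  map_source' _ _ := trivial
  map_target' _ _ := phi_mem_Dom σ _
  left_inv' x hx := Subtype.ext <| by
    rw [ContinuousLinearEquiv.apply_symm_apply]
    exact phi_psi x.2 hx
  right_inv' u _ := by
    rw [psi_phi, ContinuousLinearEquiv.symm_apply_apply]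
  open_source := (isOpen_Dom σ).preimage continuous_subtype_val
  open_target := isOpen_univ
  continuousOn_toFun := (coordEquiv _).symm.continuous.comp_continuousOn
    ((continuousOn_psi σ).comp continuous_subtype_val.continuousOn fun _ hx => hx)
  continuousOn_invFun := (((continuous_phi σ).comp
    (coordEquiv _).continuous).subtype_mk _).continuousOn

lemma contDiffAt_affCoord_phi {a b : Fin (n - 2)} (hab : a ≠ b) {u : Fin (n - 3) → ℂ}
    (hu : orep (phi σ u) a b 1 ≠ 0) :
    ContDiffAt ℂ ⊤ (fun u => affCoord (phi σ u) a b) u := by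
  have hfun : (fun u => affCoord (phi σ u) a b) =
      fun u => ovec u (σ a) (σ b) 0 / ovec u (σ a) (σ b) 1 :=
    funext fun u => orep_phi_div σ u hab
  rw [hfun]
  exact (contDiff_ovec _ _ 0).contDiffAt.div (contDiff_ovec _ _ 1).contDiffAt
    ((orep_phi_ne_zero_iff σ u hab 1).1 hu)

lemma contDiffAt_rep_div_phi (P : PairIdx n) (i j : Fin 2) {u : Fin (n - 3) → ℂ}
    (hu : (phi σ u P).rep j ≠ 0) :
    ContDiffAt ℂ ⊤ (fun u => (phi σ u P).rep i / (phi σ u P).rep j) u := by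
  have hfun : (fun u => (phi σ u P).rep i / (phi σ u P).rep j) =
      fun u => ovec u (σ (PairIdx.fst P)) (σ (PairIdx.snd P)) i /
        ovec u (σ (PairIdx.fst P)) (σ (PairIdx.snd P)) j :=
    funext fun u => rep_mk_div _ i j
  rw [hfun]
  exact (contDiff_ovec _ _ i).contDiffAt.div (contDiff_ovec _ _ j).contDiffAt
    ((rep_mk_ne_zero_iff _ j).1 hu)

end Charts

instance (n : ℕ) : ChartedSpace (EuclideanSpace ℂ (Fin (n - 3))) (FbarSet n) where
  atlas := Set.range chart
  chartAt x := chart (exists_mem_Dom x.2).choose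
  mem_chart_source x := (exists_mem_Dom x.2).choose_spec
  chart_mem_atlas _ := Set.mem_range_self _

lemma contDiffOn_chart_symm_trans {n : ℕ} (σ τ : Equiv.Perm (Fin (n - 2))) :
    ContDiffOn ℂ ⊤ ((chart σ).symm.trans (chart τ))
      ((chart σ).symm.trans (chart τ)).source := by
  intro u hu
  have hD : phi σ (coordEquiv _ u) ∈ Dom τ := hu.2
  refine ContDiffAt.contDiffWithinAt ?_
  change ContDiffAt ℂ ⊤ (fun u => (coordEquiv _).symm
    (psi τ (phi σ (coordEquiv _ u)))) u
  refine (coordEquiv _).symm.contDiff.contDiffAt.comp _ ?_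
  refine ContDiffAt.comp (g := psi τ ∘ phi σ) _ (contDiffAt_pi.2 fun k => ?_)
    (coordEquiv _).contDiff.contDiffAt
  exact contDiffAt_affCoord_phi σ (by simp)
    (orep_one_ne_zero_of_mem_Dom hD (Fin.mk_lt_mk.2 k.val.lt_succ_self))

instance isManifold (n : ℕ) :
    IsManifold (modelWithCornersSelf ℂ (EuclideanSpace ℂ (Fin (n - 3)))) (⊤ : ℕ∞)
      (FbarSet n) := by
  apply isManifold_of_contDiffOn
  rintro _ _ ⟨σ, rfl⟩ ⟨τ, rfl⟩
  simp only [modelWithCornersSelf_coe, modelWithCornersSelf_coe_symm, Set.preimage_id,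
    Set.range_id, Set.inter_univ]
  exact (contDiffOn_chart_symm_trans σ τ).of_le le_top

lemma mdifferentiableOn_rep_div {n : ℕ} (P : PairIdx n) (i j : Fin 2) :
    MDifferentiableOn (modelWithCornersSelf ℂ (EuclideanSpace ℂ (Fin (n - 3))))
      (modelWithCornersSelf ℂ ℂ) (fun x : FbarSet n => (x.val P).rep i / (x.val P).rep j)
      {x | (x.val P).rep j ≠ 0} := by
  intro x hx
  refine MDifferentiableAt.mdifferentiableWithinAt ((mdifferentiableAt_iff _ _).2 ⟨?_, ?_⟩)
  · exact ((continuousOn_rep_div i j).continuousAt ((isOpen_setOf_rep_ne_zero j).mem_nhds hx)).comp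
      (f := fun y : FbarSet n => y.val P)
      ((continuous_apply P).comp continuous_subtype_val).continuousAt
  · simp only [extChartAt_model_space_eq_id, PartialEquiv.refl_coe, extChartAt_coe,
      modelWithCornersSelf_coe, Set.range_id, writtenInExtChartAt, extChartAt_coe_symm,
      modelWithCornersSelf_coe_symm, Function.id_comp, Function.comp_id,
      differentiableWithinAt_univ]
    set σ := (exists_mem_Dom x.2).choose
    have hD : x.val ∈ Dom σ := (exists_mem_Dom x.2).choose_spec
    change DifferentiableAt ℂ (fun u => (phi σ (coordEquiv _ u) P).rep i /
      (phi σ (coordEquiv _ u) P).rep j) ((coordEquiv _).symm (psi σ x.val))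
    have hu : (phi σ (psi σ x.val) P).rep j ≠ 0 := by rwa [phi_psi x.2 hD]
    refine (((contDiffAt_rep_div_phi σ P i j ?_).comp _
      (coordEquiv _).contDiff.contDiffAt).differentiableAt (by simp))
    rwa [ContinuousLinearEquiv.apply_symm_apply]

lemma sub_three_eq_choose_sub_choose (n : ℕ) : n - 3 = (n - 2).choose 2 - (n - 3).choose 2 := by
  rcases Nat.lt_or_ge n 3 with h | h
  · interval_cases n <;> rfl
  · obtain ⟨m, rfl⟩ := Nat.exists_eq_add_of_le' h
    rw [show m + 3 - 2 = m + 1 by omega, Nat.add_sub_cancel, Nat.choose_succ_succ',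
      Nat.choose_one_right, Nat.add_sub_cancel]

end
end Fbar

theorem statement4_general (n : ℕ) :
    IsCompact (FbarSet n) ∧
    n - 3 = Nat.choose (n - 2) 2 - Nat.choose (n - 3) 2 ∧
    Topology.IsEmbedding ((↑) : ↥(FbarSet n) → (PairIdx n → CP1)) ∧
    ∃ cs : ChartedSpace (EuclideanSpace ℂ (Fin (n - 3))) ↥(FbarSet n),
      IsComplexManifoldStructureWithHolomorphicInclusion n cs :=
  ⟨Fbar.isCompact_FbarSet n, Fbar.sub_three_eq_choose_sub_choose n, .subtypeVal, inferInstance,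
    Fbar.isManifold n,
    fun P => ⟨Fbar.mdifferentiableOn_rep_div P 1 0, Fbar.mdifferentiableOn_rep_div P 0 1⟩⟩

/-- For `n ≥ 4`, the variety `F̄_n ⊆ (ℂP¹)^N`, `N = C(n-2,2)`, with its
subspace topology, is compact, the inclusion `F̄_n ↪ (ℂP¹)^N` is a (topological)
embedding, and `F̄_n` admits the structure of a complex manifold of complex dimension
`n - 3 = C(n-2,2) - C(n-3,2)` for which the inclusion is holomorphic. -/
theorem statement4 (n : ℕ) (hn : 4 ≤ n) :
    IsCompact (FbarSet n) ∧
    n - 3 = Nat.choose (n - 2) 2 - Nat.choose (n - 3) 2 ∧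
    Topology.IsEmbedding ((↑) : ↥(FbarSet n) → (PairIdx n → CP1)) ∧
    ∃ cs : ChartedSpace (EuclideanSpace ℂ (Fin (n - 3))) ↥(FbarSet n),
      IsComplexManifoldStructureWithHolomorphicInclusion n cs :=
  statement4_general n
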